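/- arXiv:0707.1417 — 3 statements merged into one kernel-verified Lean document; each statement's English description precedes it below -/
import Mathlib

section
/- Let d ≥ 1, let C = (C_1,…,C_d) be a coisometric row contraction on H_C and let E with block operators E_i = [[C_i, 0],[B_i, A_i]] on H_E = H_C ⊕ H_A be a coisometric lifting of C by a row contraction A. Then for every h ∈ H_A one has ‖B* h‖ = ‖D_{*,A} h‖, where B* : H_A → ⊕^d H_C is the column operator with components B_i*, and B* h lies in the kernel of the row operator of C. Consequently there exists a (unique) linear isometry γ from the defect space cl(ran D_{*,A}) ⊆ H_A into ker(row operator of C) ⊆ ⊕^d H_C such that γ(D_{*,A} h) = B* h for all h ∈ H_A. -/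
/-!
Comparing block entries in `∑ Eᵢ Eᵢ* = 1`, the `(1,2)` entry gives `∑ Cᵢ Bᵢ* = 0`, i.e.
`B* h ∈ ker (row C)`, and the `(2,2)` entry gives `∑ Bᵢ Bᵢ* = 1 - ∑ Aᵢ Aᵢ* = D_{*,A}²`, whence
`‖B* h‖² = ⟪D_{*,A}² h, h⟫ = ‖D_{*,A} h‖²`. So `D_{*,A} h ↦ B* h` is a well-defined isometry on
`ran D_{*,A}`; it extends by continuity to the closure, keeps its values in the closed subspace
`ker (row C)`, and is unique by density.
-/


set_option synthInstance.maxHeartbeats 1000000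
set_option maxHeartbeats 1000000
noncomputable section

open ContinuousLinearMap

variable {d : ℕ}
variable {H : Type*} [NormedAddCommGroup H] [InnerProductSpace ℂ H] [CompleteSpace H]

/-- The map Φ_T(X) = ∑ T_i X T_i^*. -/
def cpMap (T : Fin d → H →L[ℂ] H) (X : H →L[ℂ] H) : H →L[ℂ] H :=
  ∑ i, T i ∘L X ∘L adjoint (T i)

/-- Row contraction: ∑ T_i T_i^* ≤ 1. -/
def IsRowContraction (T : Fin d → H →L[ℂ] H) : Prop :=
  ∑ i, T i ∘L adjoint (T i) ≤ 1

/-- The defect operator of T^*: D_{*,T} = (1 - ∑ T_i T_i^*)^(1/2). -/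
def defectStar (T : Fin d → H →L[ℂ] H) : H →L[ℂ] H :=
  CFC.sqrt (1 - ∑ i, T i ∘L adjoint (T i))

/-- product T_α = T_{α₁} ⋯ T_{αₙ} over a word α. -/
def opWord (T : Fin d → H →L[ℂ] H) (α : List (Fin d)) : H →L[ℂ] H :=
  (α.map T).prod

/-- *-stable row contraction. -/
def IsStarStable (T : Fin d → H →L[ℂ] H) : Prop :=
  ∀ h : H, Filter.Tendsto
    (fun n : ℕ => ∑ α : Fin n → Fin d, ‖adjoint (opWord T (List.ofFn α)) h‖ ^ 2)
    Filter.atTop (nhds 0)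

instance piLpCompleteSpace {ι : Type*} (G : ι → Type*) [∀ i, NormedAddCommGroup (G i)]
    [∀ i, CompleteSpace (G i)] : CompleteSpace (PiLp 2 G) :=
  inferInstance

section Row

variable (d)

/-- The row operator of a tuple. -/
def rowOp (T : Fin d → H →L[ℂ] H) : PiLp 2 (fun _ : Fin d => H) →L[ℂ] H :=
  ∑ i, (T i) ∘L (ContinuousLinearMap.proj i) ∘L
    (PiLp.continuousLinearEquiv 2 ℂ (fun _ : Fin d => H)).toContinuousLinearMap

/-- The column operator with components (B i)^*. -/
def colAdj {G : Type*} [NormedAddCommGroup G] [InnerProductSpace ℂ G] [CompleteSpace G]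
    (B : Fin d → H →L[ℂ] G) : G →L[ℂ] PiLp 2 (fun _ : Fin d => H) :=
  ((PiLp.continuousLinearEquiv 2 ℂ (fun _ : Fin d => H)).symm.toContinuousLinearMap) ∘L
    (ContinuousLinearMap.pi (fun i => adjoint (B i)))

/-- The defect operator D_T = (1 - T^* T)^(1/2) of the row operator. -/
def defectRow (T : Fin d → H →L[ℂ] H) :
    PiLp 2 (fun _ : Fin d => H) →L[ℂ] PiLp 2 (fun _ : Fin d => H) :=
  CFC.sqrt (1 - adjoint (rowOp d T) ∘L rowOp d T)

end Row

section Block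

variable (HC HA : Type*) [NormedAddCommGroup HC] [InnerProductSpace ℂ HC] [CompleteSpace HC]
  [NormedAddCommGroup HA] [InnerProductSpace ℂ HA] [CompleteSpace HA]

/-- The Hilbert space direct sum H_C ⊕ H_A. -/
abbrev HilbSum := WithLp 2 (HC × HA)

variable {HC HA}

/-- The block operator [[X₁₁, X₁₂],[X₂₁, X₂₂]] on H_C ⊕ H_A. -/
def blockOp (X11 : HC →L[ℂ] HC) (X12 : HA →L[ℂ] HC)
    (X21 : HC →L[ℂ] HA) (X22 : HA →L[ℂ] HA) :
    HilbSum HC HA →L[ℂ] HilbSum HC HA :=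
  ((WithLp.prodContinuousLinearEquiv 2 ℂ HC HA).symm.toContinuousLinearMap) ∘L
    ((X11 ∘L fst ℂ HC HA + X12 ∘L snd ℂ HC HA).prod
      (X21 ∘L fst ℂ HC HA + X22 ∘L snd ℂ HC HA)) ∘L
    ((WithLp.prodContinuousLinearEquiv 2 ℂ HC HA).toContinuousLinearMap)

/-- Compression of an operator on H_C ⊕ H_A to H_C. -/
def comprC (X : HilbSum HC HA →L[ℂ] HilbSum HC HA) : HC →L[ℂ] HC :=
  (fst ℂ HC HA) ∘L ((WithLp.prodContinuousLinearEquiv 2 ℂ HC HA).toContinuousLinearMap) ∘L X ∘L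
    ((WithLp.prodContinuousLinearEquiv 2 ℂ HC HA).symm.toContinuousLinearMap) ∘L (inl ℂ HC HA)

end Block


/-- The i-th coordinate projection of the d-fold Hilbert space direct sum. -/
def projPiLp {H : Type*} [NormedAddCommGroup H] [InnerProductSpace ℂ H] [CompleteSpace H]
    {d : ℕ} (i : Fin d) : PiLp 2 (fun _ : Fin d => H) →L[ℂ] H :=
  (ContinuousLinearMap.proj i) ∘L
    (PiLp.continuousLinearEquiv 2 ℂ (fun _ : Fin d => H)).toContinuousLinearMap

variable {HC HA : Type*} [NormedAddCommGroup HC] [InnerProductSpace ℂ HC] [CompleteSpace HC]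
  [NormedAddCommGroup HA] [InnerProductSpace ℂ HA] [CompleteSpace HA]

namespace LinearMap

variable {𝕜 E F G : Type*} [NormedField 𝕜] [AddCommGroup E] [Module 𝕜 E]
  [NormedAddCommGroup F] [NormedSpace 𝕜 F] [NormedAddCommGroup G] [NormedSpace 𝕜 G]

def codRestrictClosureRange (S : E →ₗ[𝕜] F) : E →ₗ[𝕜] (range S).topologicalClosure :=
  S.codRestrict _ fun x => Submodule.le_topologicalClosure _ (mem_range_self S x)

theorem denseRange_codRestrictClosureRange (S : E →ₗ[𝕜] F) :
    DenseRange S.codRestrictClosureRange := by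
  intro y
  rw [closure_subtype, ← Set.range_comp]
  exact y.2

variable [CompleteSpace G] {S : E →ₗ[𝕜] F} {T : E →ₗ[𝕜] G}

theorem extendOfNorm_codRestrictClosureRange_apply (hTS : ∀ x, ‖T x‖ = ‖S x‖) (x : E) :
    T.extendOfNorm S.codRestrictClosureRange (S.codRestrictClosureRange x) = T x :=
  extendOfNorm_eq (denseRange_codRestrictClosureRange S)
    ⟨1, fun y => (hTS y).trans_le (one_mul _).symm.le⟩ x

variable (S T) in
def closureRangeIsometry (hTS : ∀ x, ‖T x‖ = ‖S x‖) :
    (range S).topologicalClosure →ₗᵢ[𝕜] G where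
  toLinearMap := (T.extendOfNorm S.codRestrictClosureRange).toLinearMap
  norm_map' v := by
    refine (denseRange_codRestrictClosureRange S).induction_on v
      (isClosed_eq (by fun_prop) continuous_norm) fun x => ?_
    rw [ContinuousLinearMap.coe_coe, extendOfNorm_codRestrictClosureRange_apply hTS, hTS]
    rfl

variable (hTS : ∀ x, ‖T x‖ = ‖S x‖)

theorem closureRangeIsometry_apply (x : E) :
    closureRangeIsometry S T hTS (S.codRestrictClosureRange x) = T x :=
  extendOfNorm_codRestrictClosureRange_apply hTS x

theorem closureRangeIsometry_mem {K : Submodule 𝕜 G} (hK : IsClosed (K : Set G))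
    (hTK : ∀ x, T x ∈ K) (v : (range S).topologicalClosure) :
    closureRangeIsometry S T hTS v ∈ K :=
  (denseRange_codRestrictClosureRange S).induction_on v
    (hK.preimage (closureRangeIsometry S T hTS).continuous)
    fun x => by rw [closureRangeIsometry_apply]; exact hTK x

theorem eq_closureRangeIsometry {γ : (range S).topologicalClosure →ₗᵢ[𝕜] G}
    (hγ : ∀ x, γ (S.codRestrictClosureRange x) = T x) : γ = closureRangeIsometry S T hTS :=
  LinearIsometry.ext fun v => congrFun ((denseRange_codRestrictClosureRange S).equalizer
    γ.continuous (closureRangeIsometry S T hTS).continuous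
    (funext fun x => (hγ x).trans (closureRangeIsometry_apply hTS x).symm)) v

end LinearMap

section BlockOperators

variable {U V : Type*} [NormedAddCommGroup U] [InnerProductSpace ℂ U]
  [NormedAddCommGroup V] [InnerProductSpace ℂ V]
  (a a' : U →L[ℂ] U) (b b' : V →L[ℂ] U) (c c' : U →L[ℂ] V) (e e' : V →L[ℂ] V)

@[simp]
theorem blockOp_apply_fst (x : HilbSum U V) : (blockOp a b c e x).fst = a x.fst + b x.snd := rfl

@[simp]
theorem blockOp_apply_snd (x : HilbSum U V) : (blockOp a b c e x).snd = c x.fst + e x.snd := rfl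

@[simp]
theorem HilbSum.fst_sum {ι : Type*} (s : Finset ι) (x : ι → HilbSum U V) :
    (∑ i ∈ s, x i).fst = ∑ i ∈ s, (x i).fst :=
  map_sum (WithLp.fstₗ 2 ℂ U V) x s

@[simp]
theorem HilbSum.snd_sum {ι : Type*} (s : Finset ι) (x : ι → HilbSum U V) :
    (∑ i ∈ s, x i).snd = ∑ i ∈ s, (x i).snd :=
  map_sum (WithLp.sndₗ 2 ℂ U V) x s

theorem HilbSum.continuousLinearMap_ext {X Y : HilbSum U V →L[ℂ] HilbSum U V}
    (hfst : ∀ x, (X x).fst = (Y x).fst) (hsnd : ∀ x, (X x).snd = (Y x).snd) : X = Y :=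
  ContinuousLinearMap.ext fun x => (WithLp.ext_iff _).2 (Prod.ext (hfst x) (hsnd x))

theorem blockOp_comp_blockOp :
    blockOp a b c e ∘L blockOp a' b' c' e' =
      blockOp (a ∘L a' + b ∘L c') (a ∘L b' + b ∘L e') (c ∘L a' + e ∘L c') (c ∘L b' + e ∘L e') :=
  HilbSum.continuousLinearMap_ext (fun x => by simp; abel) (fun x => by simp; abel)

theorem sum_blockOp {ι : Type*} (s : Finset ι) (a : ι → U →L[ℂ] U) (b : ι → V →L[ℂ] U)
    (c : ι → U →L[ℂ] V) (e : ι → V →L[ℂ] V) :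
    ∑ i ∈ s, blockOp (a i) (b i) (c i) (e i) =
      blockOp (∑ i ∈ s, a i) (∑ i ∈ s, b i) (∑ i ∈ s, c i) (∑ i ∈ s, e i) :=
  HilbSum.continuousLinearMap_ext (fun x => by simp [Finset.sum_add_distrib])
    (fun x => by simp [Finset.sum_add_distrib])

theorem one_eq_blockOp : (1 : HilbSum U V →L[ℂ] HilbSum U V) = blockOp 1 0 0 1 :=
  HilbSum.continuousLinearMap_ext (fun x => by simp) (fun x => by simp)

theorem blockOp_inj :
    blockOp a b c e = blockOp a' b' c' e' ↔ a = a' ∧ b = b' ∧ c = c' ∧ e = e' := by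
  refine ⟨fun h => ?_, by rintro ⟨rfl, rfl, rfl, rfl⟩; rfl⟩
  have hU (x : U) := DFunLike.congr_fun h (WithLp.toLp 2 (x, 0))
  have hV (y : V) := DFunLike.congr_fun h (WithLp.toLp 2 (0, y))
  refine ⟨ext fun x => ?_, ext fun y => ?_, ext fun x => ?_, ext fun y => ?_⟩
  · simpa using congrArg WithLp.fst (hU x)
  · simpa using congrArg WithLp.fst (hV y)
  · simpa using congrArg WithLp.snd (hU x)
  · simpa using congrArg WithLp.snd (hV y)

variable [CompleteSpace U] [CompleteSpace V]

theorem adjoint_blockOp :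
    adjoint (blockOp a b c e) = blockOp (adjoint a) (adjoint c) (adjoint b) (adjoint e) := by
  refine ((eq_adjoint_iff _ _).2 fun x y => ?_).symm
  simp only [WithLp.prod_inner_apply, WithLp.ofLp_fst, WithLp.ofLp_snd, blockOp_apply_fst,
    blockOp_apply_snd, inner_add_left, inner_add_right, adjoint_inner_left]
  ring

theorem blockOp_lowerTriangular_comp_adjoint :
    blockOp a 0 c e ∘L adjoint (blockOp a 0 c e) =
      blockOp (a ∘L adjoint a) (a ∘L adjoint c) (c ∘L adjoint a)
        (c ∘L adjoint c + e ∘L adjoint e) := by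
  simp [adjoint_blockOp, blockOp_comp_blockOp]

theorem sum_blockOp_comp_adjoint_eq_one_iff {ι : Type*} (s : Finset ι) (C : ι → U →L[ℂ] U)
    (A : ι → V →L[ℂ] V) (B : ι → U →L[ℂ] V) :
    ∑ i ∈ s, blockOp (C i) 0 (B i) (A i) ∘L adjoint (blockOp (C i) 0 (B i) (A i)) = 1 ↔
      ∑ i ∈ s, C i ∘L adjoint (C i) = 1 ∧ ∑ i ∈ s, C i ∘L adjoint (B i) = 0 ∧
        ∑ i ∈ s, B i ∘L adjoint (C i) = 0 ∧
        ∑ i ∈ s, B i ∘L adjoint (B i) + ∑ i ∈ s, A i ∘L adjoint (A i) = 1 := by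
  simp only [blockOp_lowerTriangular_comp_adjoint, sum_blockOp, one_eq_blockOp, blockOp_inj,
    Finset.sum_add_distrib]

end BlockOperators

@[simp]
theorem colAdj_apply {G : Type*} [NormedAddCommGroup G] [InnerProductSpace ℂ G]
    [CompleteSpace G] (B : Fin d → H →L[ℂ] G) (g : G) (i : Fin d) :
    colAdj d B g i = adjoint (B i) g := rfl

theorem norm_colAdj_apply_sq {G : Type*} [NormedAddCommGroup G] [InnerProductSpace ℂ G]
    [CompleteSpace G] (B : Fin d → H →L[ℂ] G) (g : G) :
    ‖colAdj d B g‖ ^ 2 = RCLike.re (inner ℂ ((∑ i, B i ∘L adjoint (B i)) g) g) := by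
  simp only [PiLp.norm_sq_eq_of_L2, sum_apply, sum_inner, map_sum]
  refine Finset.sum_congr rfl fun i _ => ?_
  simpa only [colAdj_apply, adjoint_adjoint] using
    apply_norm_sq_eq_inner_adjoint_left (adjoint (B i)) g

theorem rowOp_colAdj_apply {G : Type*} [NormedAddCommGroup G] [InnerProductSpace ℂ G]
    [CompleteSpace G] (C : Fin d → H →L[ℂ] H) (B : Fin d → H →L[ℂ] G) (g : G) :
    rowOp d C (colAdj d B g) = (∑ i, C i ∘L adjoint (B i)) g := by
  simp [rowOp, colAdj]

theorem norm_defectStar_apply_sq {T : Fin d → H →L[ℂ] H} (hT : IsRowContraction T) (h : H) :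
    ‖defectStar T h‖ ^ 2 = RCLike.re (inner ℂ ((1 - ∑ i, T i ∘L adjoint (T i)) h) h) := by
  have hsa : IsSelfAdjoint (defectStar T) := IsSelfAdjoint.of_nonneg (CFC.sqrt_nonneg _)
  rw [apply_norm_sq_eq_inner_adjoint_left, ← star_eq_adjoint, hsa.star_eq, ← mul_def,
    defectStar, CFC.sqrt_mul_sqrt_self _ (sub_nonneg.2 hT)]

theorem stmt2_general {d : ℕ}
    (C : Fin d → HC →L[ℂ] HC) (A : Fin d → HA →L[ℂ] HA) (B : Fin d → HC →L[ℂ] HA)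
    (hA : IsRowContraction A)
    (hE : ∑ i, blockOp (C i) 0 (B i) (A i) ∘L adjoint (blockOp (C i) 0 (B i) (A i)) = 1) :
    (∀ h : HA, ‖colAdj d B h‖ = ‖defectStar A h‖ ∧ colAdj d B h ∈
      LinearMap.ker (rowOp d C : PiLp 2 (fun _ : Fin d => HC) →ₗ[ℂ] HC)) ∧
    (∃! γ : ↥((LinearMap.range (defectStar A : HA →ₗ[ℂ] HA)).topologicalClosure) →ₗᵢ[ℂ]
        PiLp 2 (fun _ : Fin d => HC),
      (∀ v, γ v ∈ LinearMap.ker (rowOp d C : PiLp 2 (fun _ : Fin d => HC) →ₗ[ℂ] HC)) ∧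
      (∀ h : HA, γ ⟨defectStar A h,
          Submodule.le_topologicalClosure _ ⟨h, rfl⟩⟩ = colAdj d B h)) := by
  obtain ⟨-, hCB, -, hBA⟩ := (sum_blockOp_comp_adjoint_eq_one_iff _ C A B).1 hE
  have hnorm (h : HA) : ‖colAdj d B h‖ = ‖defectStar A h‖ := by
    rw [← sq_eq_sq₀ (norm_nonneg _) (norm_nonneg _), norm_colAdj_apply_sq,
      norm_defectStar_apply_sq hA, eq_sub_of_add_eq hBA]
  have hker (h : HA) :
      colAdj d B h ∈ LinearMap.ker (rowOp d C : PiLp 2 (fun _ : Fin d => HC) →ₗ[ℂ] HC) := by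
    simp [rowOp_colAdj_apply, hCB]
  refine ⟨fun h => ⟨hnorm h, hker h⟩, LinearMap.closureRangeIsometry _ _ hnorm,
    ⟨LinearMap.closureRangeIsometry_mem _ (rowOp d C).isClosed_ker hker,
      LinearMap.closureRangeIsometry_apply _⟩,
    fun γ hγ => LinearMap.eq_closureRangeIsometry hnorm hγ.2⟩

/-- for a coisometric lifting, `‖B* h‖ = ‖D_{*,A} h‖`, `B* h ∈ ker(row C)`,
and there is a unique linear isometry `γ` from `cl(ran D_{*,A})` into `ker(row C)`
with `γ (D_{*,A} h) = B* h`. -/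
theorem stmt2 {d : ℕ} (hd : 1 ≤ d)
    (C : Fin d → HC →L[ℂ] HC) (A : Fin d → HA →L[ℂ] HA) (B : Fin d → HC →L[ℂ] HA)
    (hC : ∑ i, C i ∘L adjoint (C i) = 1) (hA : IsRowContraction A)
    (hErow : IsRowContraction (fun i => blockOp (C i) 0 (B i) (A i)))
    (hE : ∑ i, blockOp (C i) 0 (B i) (A i) ∘L adjoint (blockOp (C i) 0 (B i) (A i)) = 1) :
    (∀ h : HA, ‖colAdj d B h‖ = ‖defectStar A h‖ ∧ colAdj d B h ∈
      LinearMap.ker (rowOp d C : PiLp 2 (fun _ : Fin d => HC) →ₗ[ℂ] HC)) ∧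
    (∃! γ : ↥((LinearMap.range (defectStar A : HA →ₗ[ℂ] HA)).topologicalClosure) →ₗᵢ[ℂ]
        PiLp 2 (fun _ : Fin d => HC),
      (∀ v, γ v ∈ LinearMap.ker (rowOp d C : PiLp 2 (fun _ : Fin d => HC) →ₗ[ℂ] HC)) ∧
      (∀ h : HA, γ ⟨defectStar A h,
          Submodule.le_topologicalClosure _ ⟨h, rfl⟩⟩ = colAdj d B h)) :=
  stmt2_general C A B hA hE
end
end

section
/- Let d ≥ 1 and let E with block operators E_i = [[C_i, 0],[B_i, A_i]] on H_E = H_C ⊕ H_A be a coisometric lifting of the row contraction C by a *-stable row contraction A. If X ∈ B(H_E) is a fixed point of Φ_E and x = p_C X|_{H_C} ∈ B(H_C) is its compression, then Φ_E^n([[x,0],[0,0]]) converges to X in the strong operator topology as n → ∞. In particular two fixed points of Φ_E with the same compression to H_C are equal. -/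
set_option synthInstance.maxHeartbeats 1000000
set_option maxHeartbeats 1000000
noncomputable section

open ContinuousLinearMap

variable {d : ℕ}
variable {H : Type*} [NormedAddCommGroup H] [InnerProductSpace ℂ H] [CompleteSpace H]

variable {HC HA : Type*} [NormedAddCommGroup HC] [InnerProductSpace ℂ HC] [CompleteSpace HC]
  [NormedAddCommGroup HA] [InnerProductSpace ℂ HA] [CompleteSpace HA]

/-!
Let `P = [[0,0],[0,1]]` be the projection onto `H_A`, so that `[[x,0],[0,0]] = (1-P) X (1-P)` and
`X - (1-P) X (1-P) = P X + (1-P) X P`. Since `Φ_E^n(Y) v = ∑_{|α|=n} E_α Y E_α^* v` and `E` is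
coisometric, `‖Φ_E^n(Y) v‖² ≤ ∑_{|α|=n} ‖Y E_α^* v‖²`. As `P E_α^* w = (0, A_α^* w_A)`, *-stability makes
this tend to zero for `Y = (1-P) X P`. For `Y = P X` one compares `X E_α^*` with `E_α^* X`: because
`X` is fixed, `∑_{|α|=n} ‖X E_α^* v‖²` is nondecreasing and bounded in `n`, and its increments are
exactly the squared defects `‖X E_β^* u - E_β^* X u‖²`. Splitting a long word into a prefix, along
which these increments are already small, and a suffix, along which *-stability kills the
`H_A`-component of the prefix defects, gives `∑_{|α|=n} ‖P (X E_α^* v - E_α^* X v)‖² → 0`.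
-/

set_option linter.unusedSectionVars false

open ContinuousLinearMap Filter Topology

lemma Fintype.sum_fun_fin_succ {ι M : Type*} [Fintype ι] [AddCommMonoid M] {n : ℕ}
    (f : (Fin (n + 1) → ι) → M) :
    ∑ α, f α = ∑ i, ∑ α : Fin n → ι, f (Fin.cons i α) := by
  rw [← Fintype.sum_prod_type']
  exact (Fintype.sum_equiv (Fin.consEquiv fun _ => ι) _ _ fun _ => rfl).symm

lemma Fintype.sum_fun_fin_add {ι M : Type*} [Fintype ι] [AddCommMonoid M] {n m : ℕ}
    (f : (Fin (n + m) → ι) → M) :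
    ∑ γ, f γ = ∑ α : Fin n → ι, ∑ β : Fin m → ι, f (Fin.append α β) := by
  rw [← Fintype.sum_prod_type']
  exact (Fintype.sum_equiv (Fin.appendEquiv n m) _ _ fun _ => rfl).symm

lemma norm_add_sq_le_two_mul {E : Type*} [SeminormedAddCommGroup E] (x y : E) :
    ‖x + y‖ ^ 2 ≤ 2 * (‖x‖ ^ 2 + ‖y‖ ^ 2) :=
  (pow_le_pow_left₀ (norm_nonneg _) (norm_add_le x y) 2).trans add_sq_le

lemma ContinuousLinearMap.sq_norm_apply_le {E F : Type*} [SeminormedAddCommGroup E]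
    [SeminormedAddCommGroup F] [NormedSpace ℂ E] [NormedSpace ℂ F] (Y : E →L[ℂ] F) (x : E) :
    ‖Y x‖ ^ 2 ≤ ‖Y‖ ^ 2 * ‖x‖ ^ 2 := by
  rw [← mul_pow]
  exact pow_le_pow_left₀ (norm_nonneg _) (Y.le_opNorm x) 2

section Words

variable (T : Fin d → H →L[ℂ] H)

def adjWord {n : ℕ} (α : Fin n → Fin d) : H →L[ℂ] H :=
  adjoint (opWord T (List.ofFn α))

lemma adjWord_fin_zero (α : Fin 0 → Fin d) : adjWord T α = 1 := by
  rw [adjWord, List.ofFn_zero]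
  exact adjoint_id

lemma adjWord_cons {n : ℕ} (i : Fin d) (α : Fin n → Fin d) :
    adjWord T (Fin.cons i α) = adjWord T α ∘L adjoint (T i) := by
  simp only [adjWord, List.ofFn_succ, Fin.cons_zero, Fin.cons_succ, opWord, List.map_cons,
    List.prod_cons, mul_def, adjoint_comp]

lemma adjWord_append {n m : ℕ} (α : Fin n → Fin d) (β : Fin m → Fin d) :
    adjWord T (Fin.append α β) = adjWord T β ∘L adjWord T α := by
  simp only [adjWord, List.ofFn_fin_append, opWord, List.map_append, List.prod_append, mul_def,
    adjoint_comp]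

def wordSqSum (Y : H →L[ℂ] H) (v : H) (n : ℕ) : ℝ :=
  ∑ α : Fin n → Fin d, ‖Y (adjWord T α v)‖ ^ 2

lemma wordSqSum_nonneg (Y : H →L[ℂ] H) (v : H) (n : ℕ) : 0 ≤ wordSqSum T Y v n :=
  Finset.sum_nonneg fun _ _ => sq_nonneg _

lemma wordSqSum_add (Y : H →L[ℂ] H) (v : H) (n m : ℕ) :
    wordSqSum T Y v (n + m) = ∑ α : Fin n → Fin d, wordSqSum T Y (adjWord T α v) m := by
  simp only [wordSqSum, Fintype.sum_fun_fin_add, adjWord_append, comp_apply]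

lemma wordSqSum_comp_le (Y Z : H →L[ℂ] H) (v : H) (n : ℕ) :
    wordSqSum T (Y ∘L Z) v n ≤ ‖Y‖ ^ 2 * wordSqSum T Z v n := by
  rw [wordSqSum, wordSqSum, Finset.mul_sum]
  exact Finset.sum_le_sum fun α _ => Y.sq_norm_apply_le _

lemma tendsto_wordSqSum_comp (Y Z : H →L[ℂ] H) (v : H)
    (hZ : Tendsto (wordSqSum T Z v) atTop (𝓝 0)) :
    Tendsto (wordSqSum T (Y ∘L Z) v) atTop (𝓝 0) :=
  squeeze_zero (wordSqSum_nonneg T _ v) (wordSqSum_comp_le T Y Z v)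
    (by simpa using hZ.const_mul (‖Y‖ ^ 2))

lemma cpMap_add (Y Z : H →L[ℂ] H) : cpMap T (Y + Z) = cpMap T Y + cpMap T Z := by
  simp only [cpMap, comp_add, add_comp, Finset.sum_add_distrib]

lemma inner_cpMap_apply (Y : H →L[ℂ] H) (v w : H) :
    inner ℂ (cpMap T Y v) w = ∑ i, inner ℂ (Y (adjoint (T i) v)) (adjoint (T i) w) := by
  simp only [cpMap, sum_apply, sum_inner, comp_apply, adjoint_inner_right]

lemma inner_iterate_cpMap_apply (Y : H →L[ℂ] H) (n : ℕ) (v w : H) :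
    inner ℂ ((cpMap T)^[n] Y v) w
      = ∑ α : Fin n → Fin d, inner ℂ (Y (adjWord T α v)) (adjWord T α w) := by
  induction n generalizing v w with
  | zero => simp [adjWord_fin_zero]
  | succ n ih =>
    rw [Function.iterate_succ_apply', inner_cpMap_apply, Fintype.sum_fun_fin_succ]
    simp only [ih, adjWord_cons, comp_apply]

end Words

section Coisometric

variable (T : Fin d → H →L[ℂ] H) (hT : ∑ i, T i ∘L adjoint (T i) = 1)
include hT

lemma sum_norm_adjWord_sq (n : ℕ) (w : H) :
    ∑ α : Fin n → Fin d, ‖adjWord T α w‖ ^ 2 = ‖w‖ ^ 2 := by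
  have hfix : (cpMap T)^[n] 1 = 1 :=
    Function.iterate_fixed (by simpa only [cpMap, one_def, id_comp] using hT) n
  have h := inner_iterate_cpMap_apply T 1 n w w
  simp only [hfix, one_apply_eq_self, inner_self_eq_norm_sq_to_K] at h
  exact_mod_cast h.symm

lemma wordSqSum_le (Y : H →L[ℂ] H) (v : H) (n : ℕ) :
    wordSqSum T Y v n ≤ ‖Y‖ ^ 2 * ‖v‖ ^ 2 := by
  rw [← sum_norm_adjWord_sq T hT n v, Finset.mul_sum]
  exact Finset.sum_le_sum fun α _ => Y.sq_norm_apply_le _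

lemma sq_norm_iterate_cpMap_apply_le (Y : H →L[ℂ] H) (n : ℕ) (v : H) :
    ‖(cpMap T)^[n] Y v‖ ^ 2 ≤ wordSqSum T Y v n := by
  set s := (cpMap T)^[n] Y v
  have h1 : ‖s‖ ^ 2 ≤ ∑ α : Fin n → Fin d, ‖Y (adjWord T α v)‖ * ‖adjWord T α s‖ :=
    calc ‖s‖ ^ 2 = RCLike.re (inner ℂ ((cpMap T)^[n] Y v) s) := (inner_self_eq_norm_sq s).symm
      _ = ∑ α : Fin n → Fin d, RCLike.re (inner ℂ (Y (adjWord T α v)) (adjWord T α s)) := by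
        rw [inner_iterate_cpMap_apply, map_sum]
      _ ≤ _ := Finset.sum_le_sum fun α _ => re_inner_le_norm _ _
  have h2 := Finset.sum_mul_sq_le_sq_mul_sq Finset.univ
    (fun α : Fin n → Fin d => ‖Y (adjWord T α v)‖) (fun α => ‖adjWord T α s‖)
  rw [sum_norm_adjWord_sq T hT] at h2
  have h3 := wordSqSum_nonneg T Y v n
  unfold wordSqSum at h3 ⊢
  nlinarith [sq_nonneg ‖s‖]

lemma tendsto_iterate_cpMap_apply_zero (Y : H →L[ℂ] H) (v : H)
    (hY : Tendsto (wordSqSum T Y v) atTop (𝓝 0)) :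
    Tendsto (fun n => (cpMap T)^[n] Y v) atTop (𝓝 0) := by
  rw [tendsto_zero_iff_norm_tendsto_zero]
  refine squeeze_zero (fun _ => norm_nonneg _) (fun n => ?_) (by simpa using hY.sqrt)
  exact Real.le_sqrt_of_sq_le (sq_norm_iterate_cpMap_apply_le T hT Y n v)

end Coisometric

lemma tendsto_zero_of_le_add_of_tendsto {a b : ℕ → ℝ} {c : ℕ → ℕ → ℝ} (ha : ∀ k, 0 ≤ a k)
    (hb : Tendsto b atTop (𝓝 0)) (hc : ∀ n, Tendsto (c n) atTop (𝓝 0))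
    (h : ∀ n m, a (n + m) ≤ b n + c n m) : Tendsto a atTop (𝓝 0) := by
  simp only [Metric.tendsto_atTop] at hb hc ⊢
  intro ε hε
  obtain ⟨N, hN⟩ := hb (ε / 2) (half_pos hε)
  obtain ⟨M, hM⟩ := hc N (ε / 2) (half_pos hε)
  refine ⟨N + M, fun k hk => ?_⟩
  obtain ⟨m, rfl⟩ := Nat.exists_eq_add_of_le (le_trans (Nat.le_add_right N M) hk)
  have hbN := hN N le_rfl
  have hcm := hM m (by omega)
  rw [Real.dist_eq, sub_zero] at hbN hcm ⊢
  rw [abs_of_nonneg (ha _)]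
  linarith [h N m, le_abs_self (b N), le_abs_self (c N m)]

section FixedPoint

variable (T : Fin d → H →L[ℂ] H) (hT : ∑ i, T i ∘L adjoint (T i) = 1)
  (X : H →L[ℂ] H) (hX : cpMap T X = X)
include hT hX

lemma sum_norm_sq_commutator_of_fixed (m : ℕ) (u : H) :
    ∑ β : Fin m → Fin d, ‖X (adjWord T β u) - adjWord T β (X u)‖ ^ 2
      = wordSqSum T X u m - ‖X u‖ ^ 2 := by
  have hcross : ∑ β : Fin m → Fin d,
      RCLike.re (inner ℂ (X (adjWord T β u)) (adjWord T β (X u))) = ‖X u‖ ^ 2 := by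
    rw [← map_sum, ← inner_iterate_cpMap_apply, Function.iterate_fixed hX,
      inner_self_eq_norm_sq]
  simp only [norm_sub_sq (𝕜 := ℂ), Finset.sum_add_distrib, Finset.sum_sub_distrib,
    ← Finset.mul_sum, hcross, sum_norm_adjWord_sq T hT, wordSqSum]
  ring

lemma wordSqSum_add_sub_of_fixed (v : H) (n m : ℕ) :
    wordSqSum T X v (n + m) - wordSqSum T X v n
      = ∑ α : Fin n → Fin d, ∑ β : Fin m → Fin d,
          ‖X (adjWord T β (adjWord T α v)) - adjWord T β (X (adjWord T α v))‖ ^ 2 := by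
  rw [wordSqSum_add]
  simp only [sum_norm_sq_commutator_of_fixed T hT X hX, Finset.sum_sub_distrib]
  rfl

lemma monotone_wordSqSum_of_fixed (v : H) : Monotone (wordSqSum T X v) :=
  monotone_nat_of_le_succ fun n => sub_nonneg.1 <| by
    rw [wordSqSum_add_sub_of_fixed T hT X hX]
    positivity

end FixedPoint

section Compression

variable (T : Fin d → H →L[ℂ] H) (hT : ∑ i, T i ∘L adjoint (T i) = 1)
  (X : H →L[ℂ] H) (hX : cpMap T X = X) (P : H →L[ℂ] H)

def commutatorSqSum (v : H) (n : ℕ) : ℝ :=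
  ∑ α : Fin n → Fin d, ‖P (X (adjWord T α v) - adjWord T α (X v))‖ ^ 2

include hT hX

lemma commutatorSqSum_add_le (v : H) (n m : ℕ) :
    commutatorSqSum T X P v (n + m)
      ≤ 2 * ‖P‖ ^ 2 * (wordSqSum T X v (n + m) - wordSqSum T X v n)
        + 2 * ∑ α : Fin n → Fin d,
            wordSqSum T P (X (adjWord T α v) - adjWord T α (X v)) m := by
  rw [wordSqSum_add_sub_of_fixed T hT X hX, commutatorSqSum, Fintype.sum_fun_fin_add,
    Finset.mul_sum, Finset.mul_sum, ← Finset.sum_add_distrib]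
  refine Finset.sum_le_sum fun α _ => ?_
  rw [wordSqSum, Finset.mul_sum, Finset.mul_sum, ← Finset.sum_add_distrib]
  refine Finset.sum_le_sum fun β _ => ?_
  set u := adjWord T α v
  have hsplit : X (adjWord T (Fin.append α β) v) - adjWord T (Fin.append α β) (X v)
      = (X (adjWord T β u) - adjWord T β (X u)) + adjWord T β (X u - adjWord T α (X v)) := by
    rw [adjWord_append, comp_apply, comp_apply, map_sub]
    abel
  rw [hsplit, map_add]
  calc _ ≤ 2 * (‖P (X (adjWord T β u) - adjWord T β (X u))‖ ^ 2
          + ‖P (adjWord T β (X u - adjWord T α (X v)))‖ ^ 2) := norm_add_sq_le_two_mul _ _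
    _ ≤ _ := by
      have := P.sq_norm_apply_le (X (adjWord T β u) - adjWord T β (X u))
      linarith

lemma tendsto_commutatorSqSum (hP : ∀ w, Tendsto (wordSqSum T P w) atTop (𝓝 0)) (v : H) :
    Tendsto (commutatorSqSum T X P v) atTop (𝓝 0) := by
  have hbdd : BddAbove (Set.range (wordSqSum T X v)) :=
    ⟨‖X‖ ^ 2 * ‖v‖ ^ 2, by rintro _ ⟨n, rfl⟩; exact wordSqSum_le T hT X v n⟩
  have hlim := tendsto_atTop_ciSup (monotone_wordSqSum_of_fixed T hT X hX v) hbdd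
  refine tendsto_zero_of_le_add_of_tendsto (fun _ => Finset.sum_nonneg fun _ _ => sq_nonneg _)
    (b := fun n => 2 * ‖P‖ ^ 2 * ((⨆ k, wordSqSum T X v k) - wordSqSum T X v n))
    (by simpa using
      ((tendsto_const_nhds (x := ⨆ k, wordSqSum T X v k)).sub hlim).const_mul (2 * ‖P‖ ^ 2))
    (c := fun n m => 2 * ∑ α : Fin n → Fin d,
      wordSqSum T P (X (adjWord T α v) - adjWord T α (X v)) m)
    (fun n => by simpa using (tendsto_finsetSum _ fun α _ => hP _).const_mul 2)
    fun n m => (commutatorSqSum_add_le T hT X hX P v n m).trans ?_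
  gcongr
  exact le_ciSup hbdd _

lemma tendsto_wordSqSum_comp_of_fixed (hP : ∀ w, Tendsto (wordSqSum T P w) atTop (𝓝 0))
    (v : H) : Tendsto (wordSqSum T (P ∘L X) v) atTop (𝓝 0) := by
  refine squeeze_zero (wordSqSum_nonneg T _ v) (fun n => ?_)
    (by simpa using ((tendsto_commutatorSqSum T hT X hX P hP v).add (hP (X v))).const_mul 2)
  rw [wordSqSum, commutatorSqSum, wordSqSum, ← Finset.sum_add_distrib, Finset.mul_sum]
  refine Finset.sum_le_sum fun α _ => ?_
  rw [comp_apply, ← sub_add_cancel (X (adjWord T α v)) (adjWord T α (X v)), map_add,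
    sub_add_cancel]
  exact norm_add_sq_le_two_mul _ _

theorem tendsto_iterate_cpMap_compression
    (hP : ∀ w, Tendsto (wordSqSum T P w) atTop (𝓝 0)) (v : H) :
    Tendsto (fun n => (cpMap T)^[n] ((1 - P) ∘L X ∘L (1 - P)) v) atTop (𝓝 (X v)) := by
  have hdecomp : X = (1 - P) ∘L X ∘L (1 - P) + (P ∘L X + ((1 - P) ∘L X) ∘L P) := by
    simp only [← mul_def]
    noncomm_ring
  have hiter (n : ℕ) (Y Z : H →L[ℂ] H) :
      (cpMap T)^[n] (Y + Z) = (cpMap T)^[n] Y + (cpMap T)^[n] Z :=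
    iterate_map_add (AddMonoidHom.mk' (cpMap T) (cpMap_add T)) n Y Z
  have hrest : Tendsto (fun n => (cpMap T)^[n] (P ∘L X + ((1 - P) ∘L X) ∘L P) v)
      atTop (𝓝 0) := by
    simpa only [hiter, add_apply, add_zero] using
      (tendsto_iterate_cpMap_apply_zero T hT _ v
        (tendsto_wordSqSum_comp_of_fixed T hT X hX P hP v)).add
      (tendsto_iterate_cpMap_apply_zero T hT _ v (tendsto_wordSqSum_comp T _ P v (hP v)))
  have hsplit (n : ℕ) : (cpMap T)^[n] ((1 - P) ∘L X ∘L (1 - P)) v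
      = X v - (cpMap T)^[n] (P ∘L X + ((1 - P) ∘L X) ∘L P) v := by
    rw [eq_sub_iff_add_eq, ← add_apply, ← hiter, ← hdecomp, Function.iterate_fixed hX]
  have hlim := (tendsto_const_nhds (x := X v)).sub hrest
  rw [sub_zero] at hlim
  exact hlim.congr fun n => (hsplit n).symm

end Compression

section Block

lemma WithLp.prod_ext {p : ENNReal} {α β : Type*} {x y : WithLp p (α × β)}
    (h₁ : x.fst = y.fst) (h₂ : x.snd = y.snd) : x = y :=
  (WithLp.ext_iff p).2 (Prod.ext h₁ h₂)

@[simp]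
lemma blockOp_fst (X₁₁ : HC →L[ℂ] HC) (X₁₂ : HA →L[ℂ] HC) (X₂₁ : HC →L[ℂ] HA)
    (X₂₂ : HA →L[ℂ] HA) (w : HilbSum HC HA) :
    (blockOp X₁₁ X₁₂ X₂₁ X₂₂ w).fst = X₁₁ w.fst + X₁₂ w.snd := rfl

@[simp]
lemma blockOp_snd (X₁₁ : HC →L[ℂ] HC) (X₁₂ : HA →L[ℂ] HC) (X₂₁ : HC →L[ℂ] HA)
    (X₂₂ : HA →L[ℂ] HA) (w : HilbSum HC HA) :
    (blockOp X₁₁ X₁₂ X₂₁ X₂₂ w).snd = X₂₁ w.fst + X₂₂ w.snd := rfl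

lemma adjoint_blockOp_s12 (X₁₁ : HC →L[ℂ] HC) (X₁₂ : HA →L[ℂ] HC) (X₂₁ : HC →L[ℂ] HA)
    (X₂₂ : HA →L[ℂ] HA) :
    adjoint (blockOp X₁₁ X₁₂ X₂₁ X₂₂)
      = blockOp (adjoint X₁₁) (adjoint X₂₁) (adjoint X₁₂) (adjoint X₂₂) := by
  refine ((eq_adjoint_iff _ _).2 fun x y => ?_).symm
  simp only [WithLp.prod_inner_apply, WithLp.ofLp_fst, WithLp.ofLp_snd, blockOp_fst, blockOp_snd,
    inner_add_left, inner_add_right, adjoint_inner_left]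
  ring

lemma one_sub_blockOp_zero_one : 1 - blockOp (0 : HC →L[ℂ] HC) 0 0 (1 : HA →L[ℂ] HA)
    = blockOp 1 0 0 0 := by
  ext1 w
  refine WithLp.prod_ext ?_ ?_ <;> simp

lemma blockOp_comprC (X : HilbSum HC HA →L[ℂ] HilbSum HC HA) :
    blockOp (comprC X) 0 0 0 = blockOp 1 0 0 0 ∘L X ∘L blockOp 1 0 0 0 := by
  ext1 w
  have hw : blockOp 1 0 0 0 w = WithLp.toLp 2 (w.fst, (0 : HA)) :=
    WithLp.prod_ext (by simp) (by simp)
  refine WithLp.prod_ext ?_ (by simp)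
  simp only [blockOp_fst, comp_apply, hw, one_apply_eq_self, zero_apply, add_zero]
  rfl

lemma norm_blockOp_zero_one_apply (w : HilbSum HC HA) :
    ‖blockOp (0 : HC →L[ℂ] HC) 0 0 (1 : HA →L[ℂ] HA) w‖ = ‖w.snd‖ := by
  simp [WithLp.prod_norm_eq_of_L2]

variable (C : Fin d → HC →L[ℂ] HC) (A : Fin d → HA →L[ℂ] HA) (B : Fin d → HC →L[ℂ] HA)

lemma snd_adjWord_blockOp {n : ℕ} (α : Fin n → Fin d) (w : HilbSum HC HA) :
    (adjWord (fun i => blockOp (C i) 0 (B i) (A i)) α w).snd = adjWord A α w.snd := by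
  induction n generalizing w with
  | zero => simp [adjWord_fin_zero]
  | succ n ih =>
    rw [← Fin.cons_self_tail α, adjWord_cons, adjWord_cons, comp_apply, comp_apply, ih,
      adjoint_blockOp_s12]
    simp

lemma tendsto_wordSqSum_blockOp_zero_one (hA : IsStarStable A) (w : HilbSum HC HA) :
    Tendsto (wordSqSum (fun i => blockOp (C i) 0 (B i) (A i)) (blockOp 0 0 0 1) w) atTop
      (𝓝 0) := by
  refine (hA w.snd).congr fun n => ?_
  simp only [wordSqSum, norm_blockOp_zero_one_apply, snd_adjWord_blockOp]
  rfl

lemma tendsto_iterate_cpMap_blockOp_comprC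
    (hE : ∑ i, blockOp (C i) 0 (B i) (A i) ∘L adjoint (blockOp (C i) 0 (B i) (A i)) = 1)
    (hA : IsStarStable A) (X : HilbSum HC HA →L[ℂ] HilbSum HC HA)
    (hX : cpMap (fun i => blockOp (C i) 0 (B i) (A i)) X = X) (v : HilbSum HC HA) :
    Tendsto (fun n => (cpMap (fun i => blockOp (C i) 0 (B i) (A i)))^[n]
      (blockOp (comprC X) 0 0 0) v) atTop (𝓝 (X v)) := by
  rw [blockOp_comprC, ← one_sub_blockOp_zero_one]
  exact tendsto_iterate_cpMap_compression _ hE X hX _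
    (tendsto_wordSqSum_blockOp_zero_one C A B hA) v

end Block

theorem stmt12_general {d : ℕ}
    (C : Fin d → HC →L[ℂ] HC) (A : Fin d → HA →L[ℂ] HA) (B : Fin d → HC →L[ℂ] HA)
    (hE : ∑ i, blockOp (C i) 0 (B i) (A i) ∘L adjoint (blockOp (C i) 0 (B i) (A i)) = 1)
    (hstable : IsStarStable A)
    (X : HilbSum HC HA →L[ℂ] HilbSum HC HA)
    (hX : cpMap (fun i => blockOp (C i) 0 (B i) (A i)) X = X) :
    (∀ v : HilbSum HC HA,
      Filter.Tendsto
        (fun n : ℕ =>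
          ((cpMap (fun i => blockOp (C i) 0 (B i) (A i)))^[n]
            (blockOp (comprC X) 0 0 0)) v)
        Filter.atTop (nhds (X v))) ∧
    (∀ Y : HilbSum HC HA →L[ℂ] HilbSum HC HA,
      cpMap (fun i => blockOp (C i) 0 (B i) (A i)) Y = Y →
        comprC Y = comprC X → Y = X) := by
  refine ⟨tendsto_iterate_cpMap_blockOp_comprC C A B hE hstable X hX, fun Y hY hYX => ?_⟩
  ext1 v
  have hYv := tendsto_iterate_cpMap_blockOp_comprC C A B hE hstable Y hY v
  rw [hYX] at hYv
  exact tendsto_nhds_unique hYv (tendsto_iterate_cpMap_blockOp_comprC C A B hE hstable X hX v)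

/-- for a coisometric lifting by a *-stable `A`, every fixed point of `Φ_E`
is recovered from its compression as an SOT limit; fixed points with equal compressions
coincide. -/
theorem stmt12 {d : ℕ} (hd : 1 ≤ d)
    (C : Fin d → HC →L[ℂ] HC) (A : Fin d → HA →L[ℂ] HA) (B : Fin d → HC →L[ℂ] HA)
    (hC : IsRowContraction C) (hA : IsRowContraction A)
    (hE : ∑ i, blockOp (C i) 0 (B i) (A i) ∘L adjoint (blockOp (C i) 0 (B i) (A i)) = 1)
    (hstable : IsStarStable A)
    (X : HilbSum HC HA →L[ℂ] HilbSum HC HA)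
    (hX : cpMap (fun i => blockOp (C i) 0 (B i) (A i)) X = X) :
    (∀ v : HilbSum HC HA,
      Filter.Tendsto
        (fun n : ℕ =>
          ((cpMap (fun i => blockOp (C i) 0 (B i) (A i)))^[n]
            (blockOp (comprC X) 0 0 0)) v)
        Filter.atTop (nhds (X v))) ∧
    (∀ Y : HilbSum HC HA →L[ℂ] HilbSum HC HA,
      cpMap (fun i => blockOp (C i) 0 (B i) (A i)) Y = Y →
        comprC Y = comprC X → Y = X) :=
  stmt12_general C A B hE hstable X hX
end
end

section
/- Let d ≥ 1, let R = (R_1,…,R_d) be a coisometric row contraction on a complex Hilbert space H, let K be a complex Hilbert space containing H as a closed subspace, and let V_1,…,V_d be isometries on K with pairwise orthogonal ranges such that V_i* H ⊆ H with V_i*|_H = R_i* for all i, and such that the linear span of { V_α h : α a multi-index, h ∈ H } is dense in K (i.e. V is a minimal isometric dilation of R). Then ∑_{i=1}^d V_i V_i* = 1, i.e. V is also coisometric. -/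
set_option synthInstance.maxHeartbeats 1000000
set_option maxHeartbeats 1000000
noncomputable section

open ContinuousLinearMap

variable {d : ℕ}
variable {H : Type*} [NormedAddCommGroup H] [InnerProductSpace ℂ H] [CompleteSpace H]

variable {K : Type*} [NormedAddCommGroup K] [InnerProductSpace ℂ K] [CompleteSpace K]

/-!
The V_i are isometries with orthogonal ranges, so P = ∑ V_i V_i^* is an orthogonal projection
fixing every vector in the range of each V_i. For h ∈ H the dilation property and
∑ R_i R_i^* = 1 give ⟪h, P h⟫ = ∑ ‖V_i^* h‖² = ∑ ‖R_i^* h‖² = ‖h‖², which forces P h = h.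
Hence P fixes every V_α h, and by minimality P = 1.
-/

section RowIsometry

variable {ι E : Type*} [Fintype ι] [NormedAddCommGroup E] [InnerProductSpace ℂ E]
  [CompleteSpace E]

theorem inner_sum_comp_adjoint_apply (T : ι → E →L[ℂ] E) (x : E) :
    inner ℂ x ((∑ i, T i ∘L adjoint (T i)) x) =
      ∑ i, inner ℂ (adjoint (T i) x) (adjoint (T i) x) := by
  simp only [sum_apply, comp_apply, inner_sum]
  exact Finset.sum_congr rfl fun i _ => (adjoint_inner_left _ _ _).symm

variable {V : ι → E →L[ℂ] E}

theorem sum_comp_adjoint_comp_of_orthogonal_isometries (hiso : ∀ i, adjoint (V i) ∘L V i = 1)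
    (horth : ∀ i j, i ≠ j → adjoint (V i) ∘L V j = 0) (j : ι) :
    (∑ i, V i ∘L adjoint (V i)) ∘L V j = V j := by
  classical
  have hVV (i : ι) : V i ∘L adjoint (V i) ∘L V j = if i = j then V j else 0 := by
    split_ifs with hij
    · rw [hij, hiso, one_def, comp_id]
    · rw [horth i j hij, comp_zero]
  simp only [finsetSum_comp, comp_assoc, hVV, Finset.sum_ite_eq', Finset.mem_univ, if_true]

theorem isStarProjection_sum_comp_adjoint (hiso : ∀ i, adjoint (V i) ∘L V i = 1)
    (horth : ∀ i j, i ≠ j → adjoint (V i) ∘L V j = 0) :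
    IsStarProjection (∑ i, V i ∘L adjoint (V i)) where
  isIdempotentElem := by
    simp only [IsIdempotentElem, mul_def, comp_finsetSum, ← comp_assoc,
      sum_comp_adjoint_comp_of_orthogonal_isometries hiso horth]
  isSelfAdjoint := isSelfAdjoint_sum _ fun i _ => IsSelfAdjoint.mul_star_self (V i)

end RowIsometry

theorem IsStarProjection.apply_eq_self_of_inner_apply_eq {E : Type*} [NormedAddCommGroup E]
    [InnerProductSpace ℂ E] [CompleteSpace E] {p : E →L[ℂ] E} (hp : IsStarProjection p)
    {x : E} (hx : inner ℂ x (p x) = inner ℂ x x) : p x = x := by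
  set q := 1 - p
  have hq : IsStarProjection q := hp.one_sub
  have hqq : inner ℂ (q x) (q x) = 0 :=
    calc inner ℂ (q x) (q x) = inner ℂ x (q (q x)) := by
          rw [← adjoint_inner_left q (q x) x, ← star_eq_adjoint, hq.isSelfAdjoint.star_eq]
      _ = inner ℂ x (q x) := by rw [← mul_apply_eq_comp, hq.isIdempotentElem.eq]
      _ = 0 := by simp [q, hx]
  exact (sub_eq_zero.mp (inner_self_eq_zero.mp hqq)).symm

theorem stmt16_general {d : ℕ} (Hs : Submodule ℂ K) [CompleteSpace Hs]
    (R : Fin d → Hs →L[ℂ] Hs) (hR : ∑ i, R i ∘L adjoint (R i) = 1)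
    (V : Fin d → K →L[ℂ] K)
    (hiso : ∀ i, adjoint (V i) ∘L V i = 1)
    (horth : ∀ i j, i ≠ j → adjoint (V i) ∘L V j = 0)
    (hdil : ∀ i, ∀ h : Hs, adjoint (V i) (h : K) = ((adjoint (R i) h : Hs) : K))
    (hmin : Dense
      ((Submodule.span ℂ {k : K | ∃ (α : List (Fin d)) (h : Hs), k = opWord V α (h : K)}
        : Submodule ℂ K) : Set K)) :
    ∑ i, V i ∘L adjoint (V i) = 1 := by
  have hfixes (h : Hs) : (∑ i, V i ∘L adjoint (V i)) h = h := by
    refine (isStarProjection_sum_comp_adjoint hiso horth).apply_eq_self_of_inner_apply_eq ?_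
    calc inner ℂ (h : K) ((∑ i, V i ∘L adjoint (V i)) h)
        = ∑ i, inner ℂ (adjoint (R i) h) (adjoint (R i) h) := by
          simp only [inner_sum_comp_adjoint_apply, hdil, Submodule.coe_inner]
      _ = inner ℂ h ((∑ i, R i ∘L adjoint (R i)) h) := (inner_sum_comp_adjoint_apply R h).symm
      _ = inner ℂ (h : K) h := by rw [hR, one_apply_eq_self, Submodule.coe_inner]
  refine ext_on hmin ?_
  rintro _ ⟨α, h, rfl⟩
  cases α with
  | nil => simpa [opWord] using hfixes h
  | cons j β =>
    simpa [opWord] using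
      congr($(sum_comp_adjoint_comp_of_orthogonal_isometries hiso horth j) (opWord V β h))

/-- a minimal isometric dilation of a coisometric row contraction is
coisometric. -/
theorem stmt16 {d : ℕ} (hd : 1 ≤ d) (Hs : Submodule ℂ K) [CompleteSpace Hs]
    (R : Fin d → Hs →L[ℂ] Hs) (hR : ∑ i, R i ∘L adjoint (R i) = 1)
    (V : Fin d → K →L[ℂ] K)
    (hiso : ∀ i, adjoint (V i) ∘L V i = 1)
    (horth : ∀ i j, i ≠ j → adjoint (V i) ∘L V j = 0)
    (hdil : ∀ i, ∀ h : Hs, adjoint (V i) (h : K) = ((adjoint (R i) h : Hs) : K))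
    (hmin : Dense
      ((Submodule.span ℂ {k : K | ∃ (α : List (Fin d)) (h : Hs), k = opWord V α (h : K)}
        : Submodule ℂ K) : Set K)) :
    ∑ i, V i ∘L adjoint (V i) = 1 :=
  stmt16_general Hs R hR V hiso horth hdil hmin
end
end
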